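/- arXiv:1105.6275 — 5 statements merged into one kernel-verified Lean document; each statement's English description precedes it below -/
import Mathlib

section
/- Let f ∈ Cvx(1) with f(t) ≥ f(-t) for t ≥ 0, and let f⁺ denote the inverse of f restricted to [0,1] and f⁻ the negative of the inverse of f restricted to [-1,0]. Then f is approximately α-regular if and only if lim_{t→0⁺} log H(f⁺(t), f⁻(t)) / log t = 1/α, where H(a,b) = 2/(1/a + 1/b) denotes the harmonic mean (with the convention 1/∞ = 0). -/
/-!
Strict convexity and `f' 0 = 0` make `f` strictly decreasing on `[-1, 0]` and strictly increasing
on `[0, 1]`, so `f` maps right neighbourhoods of `0` onto right neighbourhoods of `0`. For `t > 0`,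
`f (-t) ≤ f t` gives `f t / 2 ≤ (f t + f (-t)) / 2 ≤ f t`, and for `s > 0` it gives `f⁺ s ≤ f⁻ s`,
hence `f⁺ s ≤ H (f⁺ s, f⁻ s) ≤ 2 f⁺ s`. A bounded factor changes a logarithm by a bounded amount,
which disappears after dividing by `log t → -∞`; so the two limits are those of `log f t / log t`
and `log f⁺ s / log s`, which are reciprocal under the substitution `s = f t`.
-/

open Filter Set Real
open scoped ENNReal Topology

namespace ENNReal

variable {ι : Type*} {l : Filter ι}

theorem tendsto_ofReal_congr_of_tendsto_sub {u v : ι → ℝ} {c : ℝ≥0∞}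
    (h : Tendsto (fun x => u x - v x) l (𝓝 0)) :
    Tendsto (fun x => ENNReal.ofReal (u x)) l (𝓝 c) ↔
      Tendsto (fun x => ENNReal.ofReal (v x)) l (𝓝 c) := by
  suffices key : ∀ u v : ι → ℝ, Tendsto (fun x => u x - v x) l (𝓝 0) →
      Tendsto (fun x => ENNReal.ofReal (u x)) l (𝓝 c) →
      Tendsto (fun x => ENNReal.ofReal (v x)) l (𝓝 c) from
    ⟨key u v h, key v u (by simpa using h.neg)⟩
  intro u v h hu
  rcases eq_or_ne c ∞ with rfl | hc
  · rw [tendsto_ofReal_nhds_top] at hu ⊢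
    simpa using hu.atTop_add h.neg
  · -- `ofReal` only sees `max · 0`, which is 1-Lipschitz.
    have hmax : Tendsto (fun x => max (u x) 0) l (𝓝 c.toReal) := by
      simpa only [Function.comp_def, toReal_ofReal'] using (tendsto_toReal hc).comp hu
    have hdiff : Tendsto (fun x => max (v x) 0 - max (u x) 0) l (𝓝 0) :=
      squeeze_zero_norm (fun x => abs_max_sub_max_le_abs _ _ _) (by simpa using h.neg.norm)
    simpa [ofReal_toReal hc] using tendsto_ofReal (hmax.add hdiff)

theorem tendsto_ofReal_inv_iff {u : ι → ℝ} {c : ℝ≥0∞} (hu : ∀ᶠ x in l, 0 < u x) :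
    Tendsto (fun x => ENNReal.ofReal (u x)⁻¹) l (𝓝 c⁻¹) ↔
      Tendsto (fun x => ENNReal.ofReal (u x)) l (𝓝 c) :=
  (tendsto_congr' (hu.mono fun _ hx => ofReal_inv_of_pos hx)).trans tendsto_inv_iff

end ENNReal

theorem tendsto_ofReal_log_div_iff_of_le_of_le_mul {ι : Type*} {l : Filter ι}
    {a b v : ι → ℝ} {C : ℝ} {c : ℝ≥0∞} (hv : Tendsto v l atBot) (ha : ∀ᶠ x in l, 0 < a x)
    (hab : ∀ᶠ x in l, a x ≤ b x ∧ b x ≤ C * a x) :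
    Tendsto (fun x => ENNReal.ofReal (log (a x) / v x)) l (𝓝 c) ↔
      Tendsto (fun x => ENNReal.ofReal (log (b x) / v x)) l (𝓝 c) := by
  refine ENNReal.tendsto_ofReal_congr_of_tendsto_sub ?_
  have hbdd : IsBoundedUnder (· ≤ ·) l fun x => ‖log (a x) - log (b x)‖ := by
    refine isBoundedUnder_of_eventually_le (a := log C) ?_
    filter_upwards [ha, hab] with x hax ⟨hab, hba⟩
    have hC : 0 < C := pos_of_mul_pos_left (hax.trans_le (hab.trans hba)) hax.le
    have := log_le_log (hax.trans_le hab) hba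
    rw [log_mul hC.ne' hax.ne'] at this
    rw [Real.norm_eq_abs, abs_sub_comm, abs_of_nonneg (sub_nonneg.2 (log_le_log hax hab))]
    linarith
  simpa [sub_div, div_eq_mul_inv, mul_comm, mul_sub] using
    (tendsto_inv_atBot_zero.comp hv).zero_mul_isBoundedUnder_le hbdd

theorem Function.Even.tendsto_nhdsNE_zero_iff {G β : Type*} [AddCommGroup G] [LinearOrder G]
    [IsOrderedAddMonoid G] [TopologicalSpace G] [OrderTopology G] {g : G → β} {l : Filter β}
    (hg : g.Even) : Tendsto g (𝓝[≠] 0) l ↔ Tendsto g (𝓝[>] 0) l := by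
  rw [← nhdsLT_sup_nhdsGT, tendsto_sup, and_iff_right_iff_imp]
  intro h
  exact (h.comp (by simpa using tendsto_neg_nhdsLT (a := (0:G)))).congr hg

theorem StrictMonoOn.map_nhdsGT {α β : Type*} [ConditionallyCompleteLinearOrder α]
    [TopologicalSpace α] [OrderTopology α] [DenselyOrdered α] [LinearOrder β] [TopologicalSpace β]
    [OrderTopology β] {g : α → β} {a b : α} (hab : a < b)
    (hmono : StrictMonoOn g (Icc a b)) (hg : ContinuousOn g (Icc a b)) :
    map g (𝓝[>] a) = 𝓝[>] (g a) := by
  have ha : a ∈ Icc a b := left_mem_Icc.2 hab.le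
  refine le_antisymm (tendsto_nhdsWithin_iff.2 ⟨?_, ?_⟩) fun V hV => ?_
  · exact ((hg a ha).mono_of_mem_nhdsWithin (Icc_mem_nhdsGT hab)).tendsto
  · filter_upwards [Ioc_mem_nhdsGT hab] with x hx
    exact hmono ha (Ioc_subset_Icc_self hx) hx.1
  · obtain ⟨u, hu, hsub⟩ := (mem_nhdsGT_iff_exists_Ioo_subset' hab).1 (mem_map.1 hV)
    have hac : a < min u b := lt_min hu hab
    filter_upwards [Ioo_mem_nhdsGT (hmono ha ⟨hac.le, min_le_right _ _⟩ hac)] with y hy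
    obtain ⟨x, hx, rfl⟩ := intermediate_value_Ioo hac.le
      (hg.mono (Icc_subset_Icc_right (min_le_right _ _))) hy
    exact hsub ⟨hx.1, hx.2.trans_le (min_le_left _ _)⟩

namespace StrictConvexOn

variable {S : Set ℝ} {f : ℝ → ℝ} {a : ℝ}

theorem strictMonoOn_of_hasDerivAt_zero (hf : StrictConvexOn ℝ S f) (ha : a ∈ S)
    (hd : HasDerivAt f 0 a) : StrictMonoOn f (S ∩ Ici a) := by
  have hlt : ∀ z ∈ S, a < z → f a < f z := fun z hz haz => by
    have := hf.lt_slope_of_hasDerivAt ha hz haz hd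
    rw [slope_def_field, lt_div_iff₀ (sub_pos.2 haz)] at this
    linarith
  rintro x ⟨hxS, hax : a ≤ x⟩ y ⟨hyS, -⟩ hxy
  rcases hax.eq_or_lt with rfl | hax
  · exact hlt y hyS hxy
  · exact hf.convexOn.strictMonoOn ha hax (hlt x hxS hax) ⟨hxS, self_mem_Ici⟩ ⟨hyS, hxy.le⟩ hxy

theorem strictAntiOn_of_hasDerivAt_zero (hf : StrictConvexOn ℝ S f) (ha : a ∈ S)
    (hd : HasDerivAt f 0 a) : StrictAntiOn f (S ∩ Iic a) := by
  have hlt : ∀ z ∈ S, z < a → f a < f z := fun z hz hza => by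
    have := hf.slope_lt_of_hasDerivAt hz ha hza hd
    rw [slope_def_field, div_lt_iff₀ (sub_pos.2 hza)] at this
    linarith
  rintro x ⟨hxS, -⟩ y ⟨hyS, hya : y ≤ a⟩ hxy
  rcases hya.eq_or_lt with rfl | hya
  · exact hlt x hxS hxy
  · exact hf.convexOn.strictAntiOn ha hya (hlt y hyS hya) ⟨hxS, hxy.le⟩ ⟨hyS, self_mem_Iic⟩ hxy

end StrictConvexOn

theorem two_div_one_div_add_one_div_mem_Icc {a b : ℝ} (ha : 0 < a) (hab : a ≤ b) :
    2 / (1 / a + 1 / b) ∈ Icc a (2 * a) := by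
  have hb : 0 < b := ha.trans_le hab
  constructor
  · rw [le_div_iff₀ (by positivity), mul_add, mul_one_div_cancel ha.ne', mul_one_div]
    linarith [(div_le_one hb).2 hab]
  · rw [div_le_iff₀ (by positivity), mul_add, mul_assoc, mul_one_div_cancel ha.ne']
    have : 0 < a * (1 / b) := by positivity
    linarith

section Inverses

variable {f fp fm : ℝ → ℝ}

theorem tendsto_ofReal_log_symmetrization_iff (hf0 : f 0 = 0)
    (hmono : StrictMonoOn f (Icc 0 1)) (hanti : StrictAntiOn f (Icc (-1) 0))
    (hsym : ∀ t : ℝ, 0 ≤ t → t ≤ 1 → f (-t) ≤ f t) {c : ℝ≥0∞} :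
    Tendsto (fun t => ENNReal.ofReal (log ((f t + f (-t)) / 2) / log |t|)) (𝓝[≠] 0) (𝓝 c) ↔
      Tendsto (fun t => ENNReal.ofReal (log (f t) / log t)) (𝓝[>] 0) (𝓝 c) := by
  have hbounds : ∀ᶠ t in 𝓝[>] (0:ℝ), 0 < (f t + f (-t)) / 2 ∧
      (f t + f (-t)) / 2 ≤ f t ∧ f t ≤ 2 * ((f t + f (-t)) / 2) := by
    filter_upwards [Ioc_mem_nhdsGT one_pos] with t ht
    have hpos : 0 < f t := hf0 ▸ hmono ⟨le_rfl, zero_le_one⟩ (Ioc_subset_Icc_self ht) ht.1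
    have hpos' : 0 < f (-t) := hf0 ▸
      hanti ⟨by linarith [ht.2], by linarith [ht.1]⟩ ⟨by norm_num, le_rfl⟩ (by linarith [ht.1])
    have := hsym t ht.1.le ht.2
    exact ⟨by positivity, by linarith, by linarith⟩
  have habs : (fun t => ENNReal.ofReal (log ((f t + f (-t)) / 2) / log |t|)) =ᶠ[𝓝[>] 0]
      fun t => ENNReal.ofReal (log ((f t + f (-t)) / 2) / log t) := by
    filter_upwards [self_mem_nhdsWithin] with t ht
    rw [abs_of_pos ht]
  rw [Function.Even.tendsto_nhdsNE_zero_iff fun t => by simp only [neg_neg, abs_neg, add_comm],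
    tendsto_congr' habs]
  exact tendsto_ofReal_log_div_iff_of_le_of_le_mul tendsto_log_nhdsGT_zero
    (hbounds.mono fun _ h => h.1) (hbounds.mono fun _ h => h.2)

theorem tendsto_ofReal_log_inverse_iff (hmap : map f (𝓝[>] 0) = 𝓝[>] 0)
    (hfp : ∀ t ∈ Icc (0:ℝ) 1, fp (f t) = t) {c : ℝ≥0∞} :
    Tendsto (fun t => ENNReal.ofReal (log (f t) / log t)) (𝓝[>] 0) (𝓝 c) ↔
      Tendsto (fun s => ENNReal.ofReal (log (fp s) / log s)) (𝓝[>] 0) (𝓝 c⁻¹) := by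
  have hunit : Ioo (0:ℝ) 1 ∈ 𝓝[>] 0 := Ioo_mem_nhdsGT one_pos
  have hsmall : ∀ᶠ t in 𝓝[>] (0:ℝ), t ∈ Ioo 0 1 ∧ f t ∈ Ioo 0 1 :=
    Filter.Eventually.and hunit (hmap.le hunit)
  have hratio : ∀ᶠ t in 𝓝[>] (0:ℝ), 0 < log (f t) / log t :=
    hsmall.mono fun _ h => div_pos_of_neg_of_neg (log_neg h.2.1 h.2.2) (log_neg h.1.1 h.1.2)
  rw [← ENNReal.tendsto_ofReal_inv_iff hratio]
  conv_rhs => rw [← hmap, tendsto_map'_iff]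
  refine tendsto_congr' ?_
  filter_upwards [hsmall] with t ht
  simp [hfp t ⟨ht.1.1.le, ht.1.2.le⟩, inv_div]

theorem eventually_pos_and_le_of_inverses (hcont : ContinuousOn f (Icc (-1) 0)) (hf0 : f 0 = 0)
    (hanti : StrictAntiOn f (Icc (-1) 0)) (hmap : map f (𝓝[>] 0) = 𝓝[>] 0)
    (hsym : ∀ t : ℝ, 0 ≤ t → t ≤ 1 → f (-t) ≤ f t)
    (hfp : ∀ t ∈ Icc (0:ℝ) 1, fp (f t) = t) (hfm : ∀ t ∈ Icc (-1:ℝ) 0, fm (f t) = -t) :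
    ∀ᶠ s in 𝓝[>] (0:ℝ), 0 < fp s ∧ fp s ≤ fm s := by
  have hright : ∀ᶠ s in 𝓝[>] (0:ℝ), s ∈ f '' Ioc 0 1 :=
    hmap ▸ image_mem_map (Ioc_mem_nhdsGT one_pos)
  have hleft : ∀ᶠ s in 𝓝[>] (0:ℝ), s ∈ f '' Icc (-1) 0 := by
    have : 0 < f (-1) := hf0 ▸ hanti ⟨le_rfl, by norm_num⟩ ⟨by norm_num, le_rfl⟩ (by norm_num)
    filter_upwards [Ioc_mem_nhdsGT this] with s hs
    exact intermediate_value_Icc' (by norm_num) hcont ⟨by rw [hf0]; exact hs.1.le, hs.2⟩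
  filter_upwards [hright, hleft] with s ⟨t, ht, hft⟩ ⟨t', ht', hft'⟩
  subst hft
  rw [hfp t (Ioc_subset_Icc_self ht), ← hft', hfm t' ht']
  have := (hanti.le_iff_ge ⟨by linarith [ht.2], by linarith [ht.1]⟩ ht').1
    (hft' ▸ hsym t ht.1.le ht.2)
  exact ⟨ht.1, by linarith⟩

end Inverses

theorem approx_regular_iff_harmonic_mean_of_inverses_general
    (f fp fm : ℝ → ℝ)
    (hconv : StrictConvexOn ℝ (Set.Icc (-1:ℝ) 1) f)
    (hC1 : ContDiffOn ℝ 1 f (Set.Icc (-1:ℝ) 1))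
    (hf0 : f 0 = 0) (hf'0 : deriv f 0 = 0)
    (hsym : ∀ t : ℝ, 0 ≤ t → t ≤ 1 → f (-t) ≤ f t)
    (hfp : ∀ t ∈ Set.Icc (0:ℝ) 1, fp (f t) = t)
    (hfm : ∀ t ∈ Set.Icc (-1:ℝ) 0, fm (f t) = -t)
    (α : ℝ≥0∞) :
    Tendsto (fun t : ℝ => ENNReal.ofReal (Real.log ((f t + f (-t)) / 2) / Real.log |t|))
        (nhdsWithin 0 {(0:ℝ)}ᶜ) (nhds α) ↔
      Tendsto (fun t : ℝ =>
          ENNReal.ofReal (Real.log (2 / (1 / fp t + 1 / fm t)) / Real.log t))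
        (nhdsWithin 0 (Set.Ioi 0)) (nhds α⁻¹) := by
  have h0 : (0:ℝ) ∈ Icc (-1) 1 := ⟨by norm_num, by norm_num⟩
  have hd : HasDerivAt f 0 0 := by
    simpa only [hf'0] using ((hC1.differentiableOn one_ne_zero).differentiableAt
      (Icc_mem_nhds (by norm_num : (-1:ℝ) < 0) one_pos)).hasDerivAt
  have hmono : StrictMonoOn f (Icc 0 1) := (hconv.strictMonoOn_of_hasDerivAt_zero h0 hd).mono
    fun x hx => ⟨⟨by linarith [hx.1], hx.2⟩, hx.1⟩
  have hanti : StrictAntiOn f (Icc (-1) 0) := (hconv.strictAntiOn_of_hasDerivAt_zero h0 hd).mono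
    fun x hx => ⟨⟨hx.1, by linarith [hx.2]⟩, hx.2⟩
  have hmap : map f (𝓝[>] 0) = 𝓝[>] 0 := by
    simpa only [hf0] using
      hmono.map_nhdsGT one_pos (hC1.continuousOn.mono (Icc_subset_Icc (by norm_num) le_rfl))
  have hH := eventually_pos_and_le_of_inverses
    (hC1.continuousOn.mono (Icc_subset_Icc le_rfl zero_le_one)) hf0 hanti hmap hsym hfp hfm
  rw [tendsto_ofReal_log_symmetrization_iff hf0 hmono hanti hsym,
    tendsto_ofReal_log_inverse_iff hmap hfp]
  exact tendsto_ofReal_log_div_iff_of_le_of_le_mul tendsto_log_nhdsGT_zero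
    (hH.mono fun _ h => h.1) (hH.mono fun _ h => two_div_one_div_add_one_div_mem_Icc h.1 h.2)

/-- Approximate `α`-regularity (with `α ∈ [1,∞]`, encoded in `ℝ≥0∞`) is equivalent to
`lim_{t→0⁺} log H(f⁺ t, f⁻ t) / log t = 1/α`, where `H` is the harmonic mean. -/
theorem approx_regular_iff_harmonic_mean_of_inverses
    (f fp fm : ℝ → ℝ)
    (hconv : StrictConvexOn ℝ (Set.Icc (-1:ℝ) 1) f)
    (hC1 : ContDiffOn ℝ 1 f (Set.Icc (-1:ℝ) 1))
    (hf0 : f 0 = 0) (hf'0 : deriv f 0 = 0)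
    (hsym : ∀ t : ℝ, 0 ≤ t → t ≤ 1 → f (-t) ≤ f t)
    (hfp : ∀ t ∈ Set.Icc (0:ℝ) 1, fp (f t) = t)
    (hfm : ∀ t ∈ Set.Icc (-1:ℝ) 0, fm (f t) = -t)
    (α : ℝ≥0∞) (hα : 1 ≤ α) :
    Tendsto (fun t : ℝ => ENNReal.ofReal (Real.log ((f t + f (-t)) / 2) / Real.log |t|))
        (nhdsWithin 0 {(0:ℝ)}ᶜ) (nhds α) ↔
      Tendsto (fun t : ℝ =>
          ENNReal.ofReal (Real.log (2 / (1 / fp t + 1 / fm t)) / Real.log t))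
        (nhdsWithin 0 (Set.Ioi 0)) (nhds α⁻¹) :=
  approx_regular_iff_harmonic_mean_of_inverses_general f fp fm hconv hC1 hf0 hf'0 hsym hfp hfm α
end

section
/- Let f : [0,1] → [0,∞) be strictly increasing, continuous, convex with f(0)=0, and for a fixed a > 0 let f⁺ be the inverse of f and f⁺ₐ(s) be defined implicitly by f(f⁺ₐ(s)) = s - s·f⁺ₐ(s) for small s > 0. Then lim_{s→0⁺} f⁺ₐ(s)/f⁺(s) = 1; in particular f⁺ₐ(s) ≍ f⁺(s) for small s > 0. -/
/-!
Write `x = f⁺ₐ(s)` and `y = f⁺(s)`, so that `f x = (1 - x) s ≤ s = f y`, whence `x ≤ y`.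
Since `f` is convex with `f 0 = 0`, `f ((1 - x) y) ≤ (1 - x) f y = f x`, whence `(1 - x) y ≤ x`.
Thus `1 - x ≤ x / y ≤ 1`, and `x → 0` because `f x ≤ s`.
-/

open Filter Set Topology

theorem ConvexOn.map_smul_le_of_map_zero {E : Type*} [AddCommGroup E] [Module ℝ E]
    {s : Set E} {f : E → ℝ} (hf : ConvexOn ℝ s f) (h0 : (0 : E) ∈ s) (hf0 : f 0 = 0)
    {y : E} (hy : y ∈ s) {t : ℝ} (ht : t ∈ Icc (0 : ℝ) 1) : f (t • y) ≤ t * f y := by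
  simpa [hf0] using hf.2 hy h0 ht.1 (sub_nonneg.2 ht.2) (add_sub_cancel t 1)

section UnitInterval

variable {f : ℝ → ℝ}

theorem StrictMonoOn.tendsto_zero_of_map_le {α : Type*} {l : Filter α} {g u : α → ℝ}
    (hmono : StrictMonoOn f (Icc 0 1)) (hf0 : f 0 = 0)
    (hg : ∀ᶠ a in l, g a ∈ Icc (0 : ℝ) 1 ∧ f (g a) ≤ u a) (hu : Tendsto u l (𝓝 0)) :
    Tendsto g l (𝓝 0) := by
  refine tendsto_order.2 ⟨fun b hb => hg.mono fun a ha => hb.trans_le ha.1.1, fun b hb => ?_⟩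
  have hη : min b 1 ∈ Icc (0 : ℝ) 1 := ⟨le_min hb.le zero_le_one, min_le_right _ _⟩
  have hfη : 0 < f (min b 1) :=
    hf0 ▸ hmono (left_mem_Icc.2 zero_le_one) hη (lt_min hb one_pos)
  filter_upwards [hg, hu.eventually (eventually_lt_nhds hfη)] with a ⟨hga, hfga⟩ hua
  exact ((hmono.lt_iff_lt hga hη).1 (hfga.trans_lt hua)).trans_le (min_le_left _ _)

variable {x y s : ℝ}

theorem StrictMonoOn.le_of_map_eq_sub_mul (hmono : StrictMonoOn f (Icc 0 1))
    (hx : x ∈ Icc (0 : ℝ) 1) (hy : y ∈ Icc (0 : ℝ) 1) (hs : 0 ≤ s)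
    (hfx : f x = s - s * x) (hfy : f y = s) : x ≤ y :=
  (hmono.le_iff_le hx hy).1 (by rw [hfx, hfy]; nlinarith [hx.1])

theorem StrictMonoOn.one_sub_mul_le_of_map_eq_sub_mul (hmono : StrictMonoOn f (Icc 0 1))
    (hconv : ConvexOn ℝ (Icc 0 1) f) (hf0 : f 0 = 0)
    (hx : x ∈ Icc (0 : ℝ) 1) (hy : y ∈ Icc (0 : ℝ) 1)
    (hfx : f x = s - s * x) (hfy : f y = s) : (1 - x) * y ≤ x := by
  have hx' : 1 - x ∈ Icc (0 : ℝ) 1 := ⟨sub_nonneg.2 hx.2, sub_le_self _ hx.1⟩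
  have hxy : (1 - x) * y ∈ Icc (0 : ℝ) 1 :=
    ⟨mul_nonneg hx'.1 hy.1, mul_le_one₀ hx'.2 hy.1 hy.2⟩
  refine (hmono.le_iff_le hxy hx).1 ?_
  calc f ((1 - x) * y) ≤ (1 - x) * f y :=
        hconv.map_smul_le_of_map_zero (left_mem_Icc.2 zero_le_one) hf0 hy hx'
    _ = f x := by rw [hfx, hfy]; ring

end UnitInterval

theorem modified_inverse_equivalent_general (f fp fpa : ℝ → ℝ) (ε : ℝ) (hε : 0 < ε)
    (hmono : StrictMonoOn f (Set.Icc (0:ℝ) 1))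
    (hcont : ContinuousOn f (Set.Icc (0:ℝ) 1))
    (hconv : ConvexOn ℝ (Set.Icc (0:ℝ) 1) f)
    (hf0 : f 0 = 0)
    (hfp : ∀ x ∈ Set.Icc (0:ℝ) 1, fp (f x) = x)
    (hfpa : ∀ s ∈ Set.Ioo (0:ℝ) ε, 0 < fpa s ∧ fpa s ≤ 1 ∧ f (fpa s) = s - s * fpa s) :
    Tendsto (fun s => fpa s / fp s) (nhdsWithin 0 (Set.Ioi 0)) (nhds 1) := by
  have hf1 : 0 < f 1 :=
    hf0 ▸ hmono (left_mem_Icc.2 zero_le_one) (right_mem_Icc.2 zero_le_one) one_pos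
  have hsurj : SurjOn f (Icc 0 1) (Icc 0 (f 1)) := by
    have h := intermediate_value_Icc zero_le_one hcont
    rwa [hf0] at h
  have hsmall : ∀ᶠ s in 𝓝[>] (0 : ℝ), s ∈ Ioo 0 ε ∧ s ∈ Icc 0 (f 1) := by
    filter_upwards [Ioo_mem_nhdsGT (lt_min hε hf1)] with s hs
    exact ⟨⟨hs.1, hs.2.trans_le (min_le_left _ _)⟩,
      ⟨hs.1.le, (hs.2.trans_le (min_le_right _ _)).le⟩⟩
  have hfpa0 : Tendsto fpa (𝓝[>] 0) (𝓝 0) := by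
    refine hmono.tendsto_zero_of_map_le hf0 ?_
      (tendsto_nhdsWithin_of_tendsto_nhds tendsto_id)
    filter_upwards [hsmall] with s ⟨hs, _⟩
    obtain ⟨hpos, hle, heq⟩ := hfpa s hs
    exact ⟨⟨hpos.le, hle⟩, heq.trans_le (sub_le_self _ (mul_pos hs.1 hpos).le)⟩
  have hbounds :
      ∀ᶠ s in 𝓝[>] (0 : ℝ), 1 - fpa s ≤ fpa s / fp s ∧ fpa s / fp s ≤ 1 := by
    filter_upwards [hsmall] with s ⟨hs, hs'⟩
    obtain ⟨hpos, hle, hfx⟩ := hfpa s hs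
    have hx : fpa s ∈ Icc (0 : ℝ) 1 := ⟨hpos.le, hle⟩
    have hy : fp s ∈ Icc (0 : ℝ) 1 := LeftInvOn.mapsTo hfp hsurj hs'
    have hfy : f (fp s) = s := (LeftInvOn.rightInvOn_image hfp).mono hsurj hs'
    have hxy := hmono.le_of_map_eq_sub_mul hx hy hs.1.le hfx hfy
    have hypos : 0 < fp s := hpos.trans_le hxy
    have hlow := hmono.one_sub_mul_le_of_map_eq_sub_mul hconv hf0 hx hy hfx hfy
    exact ⟨(le_div_iff₀ hypos).2 hlow, (div_le_one hypos).2 hxy⟩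
  have hlower : Tendsto (fun s => 1 - fpa s) (𝓝[>] 0) (𝓝 1) := by
    simpa using (tendsto_const_nhds (x := (1 : ℝ))).sub hfpa0
  exact tendsto_of_tendsto_of_tendsto_of_le_of_le' hlower tendsto_const_nhds
    (hbounds.mono fun _ h => h.1) (hbounds.mono fun _ h => h.2)

/-- The modified inverse `f⁺ₐ`, defined by `f (f⁺ₐ s) = s - s * f⁺ₐ s`, is
asymptotically equivalent to the inverse `f⁺` as `s → 0⁺`. -/
theorem modified_inverse_equivalent (f fp fpa : ℝ → ℝ) (ε : ℝ) (hε : 0 < ε)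
    (hmono : StrictMonoOn f (Set.Icc (0:ℝ) 1))
    (hcont : ContinuousOn f (Set.Icc (0:ℝ) 1))
    (hconv : ConvexOn ℝ (Set.Icc (0:ℝ) 1) f)
    (hf0 : f 0 = 0)
    (hnonneg : ∀ x ∈ Set.Icc (0:ℝ) 1, 0 ≤ f x)
    (hfp : ∀ x ∈ Set.Icc (0:ℝ) 1, fp (f x) = x)
    (hfpa : ∀ s ∈ Set.Ioo (0:ℝ) ε, 0 < fpa s ∧ fpa s ≤ 1 ∧ f (fpa s) = s - s * fpa s) :
    Tendsto (fun s => fpa s / fp s) (nhdsWithin 0 (Set.Ioi 0)) (nhds 1) :=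
  modified_inverse_equivalent_general f fp fpa ε hε hmono hcont hconv hf0 hfp hfpa
end

section
/- Let f : [0,∞) → ℝ be a C¹ strictly convex function with f(0) = f'(0) = 0, and suppose lim_{x→0⁺} log f(x)/log x = α for some 1 < α < ∞. Then lim_{x→0⁺} log f'(x)/log x = α - 1. -/
/-!
Write `L(g) = lim_{x → 0⁺} log g(x) / log x`. Strict convexity and `f 0 = 0` force `f > 0` on
`(0, ∞)`: otherwise `f(x) ≤ -c x` near `0`, which would give `α ≤ 1`. Comparing `f'(x)` with
the slopes of `f` over `[0, x]` and `[x, 2x]` gives `f(x) ≤ x f'(x) ≤ f(2x)`, and since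
`L(f(2 ·)) = L(f) = α`, squeezing yields `L(x f'(x)) = α`, that is `L(f') = α - 1`.
-/

open Filter Topology Set Real

lemma eventually_log_neg_nhdsGT_zero : ∀ᶠ x in 𝓝[>] (0 : ℝ), log x < 0 :=
  tendsto_log_nhdsGT_zero.eventually_lt_atBot 0

lemma tendsto_const_mul_nhdsGT_zero {c : ℝ} (hc : 0 < c) :
    Tendsto (c * ·) (𝓝[>] 0) (𝓝[>] 0) :=
  tendsto_iff_comap.2 (comap_mulLeft_nhdsGT_zero hc).ge

lemma tendsto_log_const_mul_div_log {c : ℝ} (hc : 0 < c) :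
    Tendsto (fun x => log (c * x) / log x) (𝓝[>] 0) (𝓝 1) := by
  have h : Tendsto (fun x => 1 + log c / log x) (𝓝[>] 0) (𝓝 1) := by
    simpa using (tendsto_const_nhds.div_atBot tendsto_log_nhdsGT_zero).const_add 1
  refine h.congr' ?_
  filter_upwards [self_mem_nhdsWithin, eventually_log_neg_nhdsGT_zero] with x (hx : 0 < x) hlog
  rw [log_mul hc.ne' hx.ne', add_div, div_self hlog.ne, add_comm]

lemma tendsto_log_div_log_comp_const_mul {g : ℝ → ℝ} {a c : ℝ} (hc : 0 < c)
    (h : Tendsto (fun x => log (g x) / log x) (𝓝[>] 0) (𝓝 a)) :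
    Tendsto (fun x => log (g (c * x)) / log x) (𝓝[>] 0) (𝓝 a) := by
  have hmul := (h.comp (tendsto_const_mul_nhdsGT_zero hc)).mul (tendsto_log_const_mul_div_log hc)
  rw [mul_one] at hmul
  refine hmul.congr' ?_
  filter_upwards [(tendsto_const_mul_nhdsGT_zero hc).eventually eventually_log_neg_nhdsGT_zero]
    with x hlog
  exact div_mul_div_cancel₀ hlog.ne

lemma le_one_of_tendsto_log_div_log {g : ℝ → ℝ} {a c : ℝ} (hc : 0 < c)
    (hg : ∀ᶠ x in 𝓝[>] 0, c * x ≤ |g x|)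
    (h : Tendsto (fun x => log (g x) / log x) (𝓝[>] 0) (𝓝 a)) : a ≤ 1 := by
  refine le_of_tendsto_of_tendsto h (tendsto_log_const_mul_div_log hc) ?_
  filter_upwards [hg, self_mem_nhdsWithin, eventually_log_neg_nhdsGT_zero] with x hgx (hx : 0 < x)
    hlog
  rw [← log_abs (g x)]
  exact div_le_div_of_nonpos_of_le hlog.le (log_le_log (by positivity) hgx)

lemma tendsto_log_div_log_of_le_of_le {u v w : ℝ → ℝ} {a : ℝ}
    (hu : Tendsto (fun x => log (u x) / log x) (𝓝[>] 0) (𝓝 a))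
    (hw : Tendsto (fun x => log (w x) / log x) (𝓝[>] 0) (𝓝 a))
    (huvw : ∀ᶠ x in 𝓝[>] 0, 0 < u x ∧ u x ≤ v x ∧ v x ≤ w x) :
    Tendsto (fun x => log (v x) / log x) (𝓝[>] 0) (𝓝 a) := by
  have hlog := huvw.and eventually_log_neg_nhdsGT_zero
  refine tendsto_of_tendsto_of_tendsto_of_le_of_le' hw hu ?_ ?_
  all_goals
    filter_upwards [hlog] with x ⟨⟨hu0, huv, hvw⟩, hx⟩
    apply div_le_div_of_nonpos_of_le hx.le
  · exact log_le_log (hu0.trans_le huv) hvw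
  · exact log_le_log hu0 huv

lemma tendsto_log_div_log_of_mul_self {g : ℝ → ℝ} {a : ℝ}
    (h : Tendsto (fun x => log (x * g x) / log x) (𝓝[>] 0) (𝓝 a))
    (hg : ∀ᶠ x in 𝓝[>] 0, x * g x ≠ 0) :
    Tendsto (fun x => log (g x) / log x) (𝓝[>] 0) (𝓝 (a - 1)) := by
  refine (h.sub_const 1).congr' ?_
  filter_upwards [hg, eventually_log_neg_nhdsGT_zero] with x hxg hlog
  rw [log_mul (left_ne_zero_of_mul hxg) (right_ne_zero_of_mul hxg), add_div, div_self hlog.ne,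
    add_sub_cancel_left]

namespace ConvexOn

variable {f : ℝ → ℝ} {x : ℝ}

lemma div_le_div_of_map_zero (hf : ConvexOn ℝ (Ici 0) f) (h0 : f 0 = 0) {a : ℝ} (hx : 0 < x)
    (hxa : x ≤ a) : f x / x ≤ f a / a := by
  have hmono := hf.slope_mono self_mem_Ici ⟨mem_Ici.2 hx.le, hx.ne'⟩
    ⟨mem_Ici.2 (hx.trans_le hxa).le, (hx.trans_le hxa).ne'⟩ hxa
  simpa [slope_def_field, h0] using hmono

lemma map_le_mul_deriv (hf : ConvexOn ℝ (Ici 0) f) (h0 : f 0 = 0) (hx : 0 < x)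
    (hd : DifferentiableAt ℝ f x) : f x ≤ x * deriv f x := by
  have hslope := hf.slope_le_deriv self_mem_Ici hx.le hx hd
  rw [slope_def_field, h0, sub_zero, sub_zero, div_le_iff₀ hx] at hslope
  linarith

lemma mul_deriv_le_map_two_mul_sub (hf : ConvexOn ℝ (Ici 0) f) (hx : 0 < x)
    (hd : DifferentiableAt ℝ f x) : x * deriv f x ≤ f (2 * x) - f x := by
  have hslope := hf.deriv_le_slope hx.le (by positivity : (0 : ℝ) ≤ 2 * x) (by linarith) hd
  rw [slope_def_field, show 2 * x - x = x by ring, le_div_iff₀ hx] at hslope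
  linarith

end ConvexOn

lemma StrictConvexOn.pos_of_tendsto_log_div_log {f : ℝ → ℝ} {α : ℝ}
    (hf : StrictConvexOn ℝ (Ici 0) f) (h0 : f 0 = 0) (hα : 1 < α)
    (hreg : Tendsto (fun x => log (f x) / log x) (𝓝[>] 0) (𝓝 α)) {x : ℝ} (hx : 0 < x) :
    0 < f x := by
  by_contra! hfx
  have hmid : f (x / 2) < 0 := by
    have h := hf.2 self_mem_Ici hx.le hx.ne (by norm_num : (0 : ℝ) < 1 / 2)
      (by norm_num : (0 : ℝ) < 1 / 2) (by norm_num)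
    simp only [smul_eq_mul, mul_zero, zero_add, h0] at h
    rw [show x / 2 = 1 / 2 * x by ring]
    linarith
  have hc : 0 < -(f (x / 2) / (x / 2)) := neg_pos.2 (div_neg_of_neg_of_pos hmid (by positivity))
  refine hα.not_ge (le_one_of_tendsto_log_div_log hc ?_ hreg)
  filter_upwards [Ioo_mem_nhdsGT (by positivity : (0 : ℝ) < x / 2)] with y ⟨hy, hyx⟩
  have hslope := hf.convexOn.div_le_div_of_map_zero h0 hy hyx.le
  rw [div_le_iff₀ hy] at hslope
  linarith [neg_abs_le (f y)]

theorem deriv_log_limit_general (f : ℝ → ℝ) (α : ℝ) (hα1 : 1 < α)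
    (hC1 : ContDiffOn ℝ 1 f (Set.Ici (0:ℝ)))
    (hconv : StrictConvexOn ℝ (Set.Ici (0:ℝ)) f)
    (hf0 : f 0 = 0)
    (hreg : Tendsto (fun x => Real.log (f x) / Real.log x)
      (nhdsWithin 0 (Set.Ioi 0)) (nhds α)) :
    Tendsto (fun x => Real.log (deriv f x) / Real.log x)
      (nhdsWithin 0 (Set.Ioi 0)) (nhds (α - 1)) := by
  have hdiff : ∀ x : ℝ, 0 < x → DifferentiableAt ℝ f x := fun x hx =>
    (hC1.differentiableOn one_ne_zero).differentiableAt (Ici_mem_nhds hx)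
  have hbounds : ∀ᶠ x in 𝓝[>] 0, 0 < f x ∧ f x ≤ x * deriv f x ∧ x * deriv f x ≤ f (2 * x) := by
    filter_upwards [self_mem_nhdsWithin] with x (hx : 0 < x)
    have hpos := hconv.pos_of_tendsto_log_div_log hf0 hα1 hreg hx
    refine ⟨hpos, hconv.convexOn.map_le_mul_deriv hf0 hx (hdiff x hx), ?_⟩
    linarith [hconv.convexOn.mul_deriv_le_map_two_mul_sub hx (hdiff x hx)]
  have hmul_deriv : Tendsto (fun x => log (x * deriv f x) / log x) (𝓝[>] 0) (𝓝 α) :=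
    tendsto_log_div_log_of_le_of_le hreg (tendsto_log_div_log_comp_const_mul two_pos hreg) hbounds
  refine tendsto_log_div_log_of_mul_self hmul_deriv ?_
  filter_upwards [hbounds] with x ⟨hpos, hle, _⟩
  exact (hpos.trans_le hle).ne'

/-- If `f` is `C¹`, strictly convex on `[0,∞)` with `f 0 = f' 0 = 0` and
`log f(x) / log x → α` as `x → 0⁺`, then `log f'(x) / log x → α - 1`. -/
theorem deriv_log_limit (f : ℝ → ℝ) (α : ℝ) (hα1 : 1 < α)
    (hC1 : ContDiffOn ℝ 1 f (Set.Ici (0:ℝ)))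
    (hconv : StrictConvexOn ℝ (Set.Ici (0:ℝ)) f)
    (hf0 : f 0 = 0) (hf'0 : deriv f 0 = 0)
    (hreg : Tendsto (fun x => Real.log (f x) / Real.log x)
      (nhdsWithin 0 (Set.Ioi 0)) (nhds α)) :
    Tendsto (fun x => Real.log (deriv f x) / Real.log x)
      (nhdsWithin 0 (Set.Ioi 0)) (nhds (α - 1)) :=
  deriv_log_limit_general f α hα1 hC1 hconv hf0 hreg
end

section
/- Let f : [0,∞) → ℝ be C¹, strictly convex, even-extendable with f(0)=f'(0)=0, approximately α-regular with 1 < α < ∞. Then its Legendre transform f*(y) = sup_x (xy - f(x)) is approximately α*-regular at 0 with 1/α + 1/α* = 1. -/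
/-!
Near `0⁺`, approximate `α`-regularity says that `t ^ γ ≤ f t ≤ t ^ β` eventually, for all
`β < α < γ`. Young's inequality turns `x ^ γ ≤ f x` into `x * y - f x ≤ y ^ γ*` for small `x > 0`,
while for larger `x` convexity gives `x * y ≤ f x` once `y` is small, so `f* y ≤ y ^ γ*`.
Testing the supremum at `x = (y / 2) ^ (1 / (β - 1))` gives `f* y ≥ (y / 2) ^ β*`. As `p ↦ p*`
is continuous at `α`, this squeezes `f*` between powers of `y` with exponents arbitrarily close
to `α*`; evenness carries the limit from `0⁺` to `0`.
-/

open Filter Real Set Topology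

section PowerSandwich

variable {s t β γ : ℝ}

lemma rpow_lt_and_lt_rpow_of_log_div_log_mem_Ioo (ht₀ : 0 < t) (ht₁ : t < 1) (hs : 0 < s)
    (h : log s / log t ∈ Ioo β γ) : t ^ γ < s ∧ s < t ^ β := by
  have hlog : log t < 0 := log_neg ht₀ ht₁
  rw [mem_Ioo, lt_div_iff_of_neg hlog, div_lt_iff_of_neg hlog] at h
  rw [← log_lt_log_iff (rpow_pos_of_pos ht₀ γ) hs, ← log_lt_log_iff hs (rpow_pos_of_pos ht₀ β),
    log_rpow ht₀, log_rpow ht₀]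
  exact ⟨h.2, h.1⟩

lemma log_div_log_mem_Icc_of_rpow_le_le (ht₀ : 0 < t) (ht₁ : t < 1) (hγ : t ^ γ ≤ s)
    (hβ : s ≤ t ^ β) : log s / log t ∈ Icc β γ := by
  have hlog : log t < 0 := log_neg ht₀ ht₁
  have hs : 0 < s := (rpow_pos_of_pos ht₀ γ).trans_le hγ
  rw [← log_le_log_iff (rpow_pos_of_pos ht₀ γ) hs, log_rpow ht₀] at hγ
  rw [← log_le_log_iff hs (rpow_pos_of_pos ht₀ β), log_rpow ht₀] at hβ
  rw [mem_Icc, le_div_iff_of_neg hlog, div_le_iff_of_neg hlog]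
  exact ⟨hβ, hγ⟩

variable {g : ℝ → ℝ} {α : ℝ}

lemma eventually_rpow_lt_and_lt_rpow_of_tendsto_log_div_log
    (hg : Tendsto (fun t => log (g t) / log t) (𝓝[>] 0) (𝓝 α)) (hpos : ∀ᶠ t in 𝓝[>] 0, 0 < g t)
    (hβ : β < α) (hγ : α < γ) : ∀ᶠ t in 𝓝[>] 0, t ^ γ < g t ∧ g t < t ^ β := by
  filter_upwards [hg.eventually (Ioo_mem_nhds hβ hγ), hpos, Ioo_mem_nhdsGT one_pos]
    with t hmem hgt ht
  exact rpow_lt_and_lt_rpow_of_log_div_log_mem_Ioo ht.1 ht.2 hgt hmem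

lemma tendsto_log_div_log_of_eventually_rpow_le_le
    (h : ∀ β < α, ∀ γ > α, ∀ᶠ t in 𝓝[>] 0, t ^ γ ≤ g t ∧ g t ≤ t ^ β) :
    Tendsto (fun t => log (g t) / log t) (𝓝[>] 0) (𝓝 α) := by
  have hmem : ∀ β < α, ∀ γ > α, ∀ᶠ t in 𝓝[>] 0, log (g t) / log t ∈ Icc β γ := by
    intro β hβ γ hγ
    filter_upwards [h β hβ γ hγ, Ioo_mem_nhdsGT one_pos] with t hg ht
    exact log_div_log_mem_Icc_of_rpow_le_le ht.1 ht.2 hg.1 hg.2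
  rw [tendsto_order]
  refine ⟨fun a ha => ?_, fun b hb => ?_⟩
  · obtain ⟨β, haβ, hβ⟩ := exists_between ha
    filter_upwards [hmem β hβ (α + 1) (by linarith)] with t ht using haβ.trans_le ht.1
  · obtain ⟨γ, hγ, hγb⟩ := exists_between hb
    filter_upwards [hmem (α - 1) (by linarith) γ hγ] with t ht using ht.2.trans_lt hγb

lemma eventually_rpow_le_div_rpow {p q c : ℝ} (hpq : p < q) (hc : 0 < c) :
    ∀ᶠ t in 𝓝[>] 0, t ^ q ≤ (t / c) ^ p := by
  have hlim : Tendsto (fun t : ℝ => t ^ (q - p)) (𝓝[>] 0) (𝓝 0) := by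
    simpa [zero_rpow (sub_pos.2 hpq).ne'] using
      ((continuousAt_rpow_const 0 (q - p) (Or.inr (sub_pos.2 hpq).le)).tendsto).mono_left
        nhdsWithin_le_nhds
  have hcp : 0 < c ^ p := rpow_pos_of_pos hc p
  filter_upwards [hlim.eventually (gt_mem_nhds (one_div_pos.2 hcp)), self_mem_nhdsWithin]
    with t ht (ht₀ : 0 < t)
  rw [lt_div_iff₀ hcp] at ht
  rw [div_rpow ht₀.le hc.le, le_div_iff₀ hcp, show q = (q - p) + p by ring,
    rpow_add ht₀]
  calc t ^ (q - p) * t ^ p * c ^ p = (t ^ (q - p) * c ^ p) * t ^ p := by ring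
    _ ≤ 1 * t ^ p := by gcongr
    _ = t ^ p := one_mul _

end PowerSandwich

/-- As `sSup` of an unbounded range is `0`, lower bounds on it need `BddAbove`. -/
noncomputable def legendreTransform (f : ℝ → ℝ) (y : ℝ) : ℝ :=
  sSup (range fun x => x * y - f x)

section LegendreTransform

variable {f : ℝ → ℝ} {y : ℝ}

lemma legendreTransform_neg (heven : ∀ t, f (-t) = f t) (y : ℝ) :
    legendreTransform f (-y) = legendreTransform f y := by
  have h : (fun x => x * -y - f x) = (fun x => x * y - f x) ∘ Neg.neg :=
    funext fun x => by simp [heven]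
  rw [legendreTransform, h, neg_surjective.range_comp, legendreTransform]

lemma le_legendreTransform (hbdd : BddAbove (range fun x => x * y - f x)) (x : ℝ) :
    x * y - f x ≤ legendreTransform f y :=
  le_csSup hbdd (mem_range_self x)

lemma legendreTransform_le {c : ℝ} (h : ∀ x, x * y - f x ≤ c) : legendreTransform f y ≤ c :=
  csSup_le (range_nonempty _) (forall_mem_range.2 h)

lemma mul_sub_le_rpow_of_le_div {δ γ γ' : ℝ} (hf : ConvexOn ℝ univ f) (hf0 : f 0 = 0)
    (hnn : ∀ x, 0 ≤ f x) (hγ : γ.HolderConjugate γ') (hδ : 0 < δ)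
    (hpow : ∀ x ∈ Ioc 0 δ, x ^ γ ≤ f x) (hy : 0 ≤ y) (hyδ : y ≤ f δ / δ) (x : ℝ) :
    x * y - f x ≤ y ^ γ' := by
  have hyγ' : 0 ≤ y ^ γ' := rpow_nonneg hy γ'
  rcases le_or_gt x 0 with hx | hx
  · nlinarith [hnn x, mul_nonpos_of_nonpos_of_nonneg hx hy]
  rcases le_or_gt x δ with hxδ | hδx
  · have hyoung := young_inequality_of_nonneg hx.le hy hγ
    have hxγ : x ^ γ / γ ≤ x ^ γ := div_le_self (rpow_nonneg hx.le γ) hγ.lt.le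
    have hyγ : y ^ γ' / γ' ≤ y ^ γ' := div_le_self hyγ' hγ.symm.lt.le
    linarith [hpow x ⟨hx, hxδ⟩]
  · have hslope : f δ / δ ≤ f x / x := by
      simpa [hf0] using hf.secant_mono (a := 0) trivial trivial trivial hδ.ne' hx.ne' hδx.le
    have : x * y ≤ f x := by
      calc x * y ≤ x * (f x / x) := by gcongr; exact hyδ.trans hslope
        _ = f x := mul_div_cancel₀ _ hx.ne'
    linarith

lemma eventually_mul_sub_le_rpow {γ γ' : ℝ} (hf : ConvexOn ℝ univ f) (hf0 : f 0 = 0)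
    (hnn : ∀ x, 0 ≤ f x) (hγ : γ.HolderConjugate γ') (hpow : ∀ᶠ x in 𝓝[>] 0, x ^ γ ≤ f x) :
    ∀ᶠ y in 𝓝[>] 0, ∀ x, x * y - f x ≤ y ^ γ' := by
  obtain ⟨u, hu, hsub⟩ := (mem_nhdsGT_iff_exists_Ioo_subset).1 hpow
  have hδ : 0 < u / 2 := half_pos hu
  have hpowδ : ∀ x ∈ Ioc 0 (u / 2), x ^ γ ≤ f x := fun x hx =>
    hsub ⟨hx.1, hx.2.trans_lt (half_lt_self hu)⟩
  have hslope : 0 < f (u / 2) / (u / 2) :=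
    div_pos ((rpow_pos_of_pos hδ γ).trans_le (hpowδ _ ⟨hδ, le_rfl⟩)) hδ
  filter_upwards [Ioo_mem_nhdsGT hslope] with y hy
  exact mul_sub_le_rpow_of_le_div hf hf0 hnn hγ hδ hpowδ hy.1.le hy.2.le

lemma half_rpow_conjExponent_le_legendreTransform {β : ℝ}
    (hbdd : BddAbove (range fun x => x * y - f x)) (hβ : 1 < β) (hy : 0 < y)
    (hfx : f ((y / 2) ^ (β - 1)⁻¹) ≤ ((y / 2) ^ (β - 1)⁻¹) ^ β) :
    (y / 2) ^ β.conjExponent ≤ legendreTransform f y := by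
  set x := (y / 2) ^ (β - 1)⁻¹ with hx
  have hy2 : 0 < y / 2 := half_pos hy
  have hβ1 : β - 1 ≠ 0 := (sub_pos.2 hβ).ne'
  -- `x` is chosen so that `x ^ (β - 1) = y / 2`, i.e. `x ^ β = x * y / 2`
  have hxβ : x ^ β = x * (y / 2) := by
    rw [show β = 1 + (β - 1) by ring, rpow_add (rpow_pos_of_pos hy2 _), rpow_one, hx,
      rpow_inv_rpow hy2.le hβ1]
  have hconj : β.conjExponent = (β - 1)⁻¹ + 1 := by
    rw [conjExponent]; field_simp; ring
  calc (y / 2) ^ β.conjExponent = x * y - x ^ β := by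
        rw [hxβ, hconj, rpow_add hy2, rpow_one, hx]; ring
    _ ≤ x * y - f x := by linarith
    _ ≤ legendreTransform f y := le_legendreTransform hbdd x

lemma eventually_half_rpow_conjExponent_le_legendreTransform {β : ℝ} (hβ : 1 < β)
    (hpow : ∀ᶠ x in 𝓝[>] 0, f x ≤ x ^ β)
    (hbdd : ∀ᶠ y in 𝓝[>] 0, BddAbove (range fun x => x * y - f x)) :
    ∀ᶠ y in 𝓝[>] 0, (y / 2) ^ β.conjExponent ≤ legendreTransform f y := by
  have hexp : 0 < (β - 1)⁻¹ := inv_pos.2 (sub_pos.2 hβ)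
  have hx : Tendsto (fun y : ℝ => (y / 2) ^ (β - 1)⁻¹) (𝓝[>] 0) (𝓝[>] 0) := by
    refine tendsto_nhdsWithin_iff.2 ⟨?_, ?_⟩
    · have hc : ContinuousAt (fun y : ℝ => (y / 2) ^ (β - 1)⁻¹) 0 :=
        (continuousAt_rpow_const _ _ (Or.inr hexp.le)).comp (continuousAt_id.div_const 2)
      simpa [zero_rpow hexp.ne'] using hc.tendsto.mono_left nhdsWithin_le_nhds
    · filter_upwards [self_mem_nhdsWithin] with y (hy : 0 < y)
      exact rpow_pos_of_pos (half_pos hy) _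
  filter_upwards [hx.eventually hpow, hbdd, self_mem_nhdsWithin] with y hfx hb hy
  exact half_rpow_conjExponent_le_legendreTransform hb hβ hy hfx

end LegendreTransform

theorem tendsto_log_legendreTransform_div_log {f : ℝ → ℝ} {α : ℝ} (hf : ConvexOn ℝ univ f)
    (hf0 : f 0 = 0) (hnn : ∀ x, 0 ≤ f x) (hα : 1 < α) (hpos : ∀ᶠ t in 𝓝[>] 0, 0 < f t)
    (hreg : Tendsto (fun t => log (f t) / log t) (𝓝[>] 0) (𝓝 α)) :
    Tendsto (fun y => log (legendreTransform f y) / log y) (𝓝[>] 0) (𝓝 α.conjExponent) := by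
  refine tendsto_log_div_log_of_eventually_rpow_le_le fun b hb c hc => ?_
  have hconj : Tendsto conjExponent (𝓝 α) (𝓝 α.conjExponent) :=
    (continuousAt_id.div (continuousAt_id.sub continuousAt_const) (sub_pos.2 hα).ne').tendsto
  obtain ⟨γ, hγb, hαγ⟩ := ((hconj.eventually (lt_mem_nhds hb)).filter_mono nhdsWithin_le_nhds
    |>.and (self_mem_nhdsWithin : Ioi α ∈ 𝓝[>] α)).exists
  obtain ⟨β, hβc, hβ⟩ := ((hconj.eventually (gt_mem_nhds hc)).filter_mono nhdsWithin_le_nhds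
    |>.and (Ioo_mem_nhdsLT hα)).exists
  have hsandwich := eventually_rpow_lt_and_lt_rpow_of_tendsto_log_div_log hreg hpos hβ.2 hαγ
  have hupper := eventually_mul_sub_le_rpow hf hf0 hnn
    (HolderConjugate.conjExponent (hα.trans hαγ)) (hsandwich.mono fun _ h => h.1.le)
  have hlower := eventually_half_rpow_conjExponent_le_legendreTransform hβ.1
    (hsandwich.mono fun _ h => h.2.le) (hupper.mono fun _ h => ⟨_, forall_mem_range.2 h⟩)
  filter_upwards [hupper, hlower, eventually_rpow_le_div_rpow hβc two_pos,
    Ioo_mem_nhdsGT one_pos] with y hup hlow habs hy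
  exact ⟨habs.trans hlow,
    (legendreTransform_le hup).trans (rpow_le_rpow_of_exponent_ge hy.1 hy.2.le hγb.le)⟩

lemma tendsto_nhdsNE_zero_of_even {X : Type*} {g : ℝ → X} {l : Filter X}
    (heven : ∀ y, g (-y) = g y) (h : Tendsto g (𝓝[>] 0) l) : Tendsto g (𝓝[≠] 0) l := by
  have hneg : Tendsto (fun y : ℝ => -y) (𝓝[<] 0) (𝓝[>] 0) := by
    simpa using (continuous_neg (G := ℝ)).continuousWithinAt.tendsto_nhdsWithin (x := 0)
      (s := Iio 0) (t := Ioi 0) fun _ => neg_pos.2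
  rw [← nhdsLT_sup_nhdsGT, tendsto_sup]
  exact ⟨by simpa only [Function.comp_def, heven] using h.comp hneg, h⟩

lemma StrictConvexOn.pos_of_even {f : ℝ → ℝ} (hf : StrictConvexOn ℝ univ f)
    (heven : ∀ t, f (-t) = f t) (hf0 : f 0 = 0) {t : ℝ} (ht : t ≠ 0) : 0 < f t := by
  have h := hf.2 trivial trivial (show t ≠ -t by contrapose! ht; linarith)
    one_half_pos one_half_pos (add_halves 1)
  simp only [smul_eq_mul, heven] at h
  rw [show 1 / 2 * t + 1 / 2 * -t = 0 by ring, hf0] at h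
  linarith

theorem legendre_transform_approx_regular_general (f : ℝ → ℝ) (α αs : ℝ)
    (hα : 1 < α) (hdual : 1 / α + 1 / αs = 1)
    (heven : ∀ t : ℝ, f (-t) = f t)
    (hconv : StrictConvexOn ℝ Set.univ f)
    (hf0 : f 0 = 0)
    (hreg : Tendsto (fun t : ℝ => Real.log (f t) / Real.log |t|)
      (nhdsWithin 0 {(0:ℝ)}ᶜ) (nhds α)) :
    Tendsto (fun y : ℝ =>
        Real.log (sSup (Set.range fun x : ℝ => x * y - f x)) / Real.log |y|)
      (nhdsWithin 0 {(0:ℝ)}ᶜ) (nhds αs) := by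
  have hpos : ∀ t, t ≠ 0 → 0 < f t := fun t => hconv.pos_of_even heven hf0
  have hnn : ∀ t, 0 ≤ f t := fun t => by
    rcases eq_or_ne t 0 with rfl | ht
    exacts [hf0.ge, (hpos t ht).le]
  have hαs : α.conjExponent = αs :=
    (holderConjugate_iff.2 ⟨hα, by simpa only [one_div] using hdual⟩).conjExponent_eq
  have habs : ∀ᶠ t : ℝ in 𝓝[>] 0, |t| = t :=
    eventually_nhdsWithin_of_forall fun t (ht : 0 < t) => abs_of_pos ht
  have hright := tendsto_log_legendreTransform_div_log hconv.convexOn hf0 hnn hα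
    (eventually_nhdsWithin_of_forall fun t (ht : 0 < t) => hpos t ht.ne')
    ((hreg.mono_left (nhdsWithin_mono _ fun t (ht : 0 < t) => ht.ne')).congr'
      (habs.mono fun t ht => by rw [ht]))
  refine tendsto_nhdsNE_zero_of_even (g := fun y => log (legendreTransform f y) / log |y|)
    (fun y => by rw [legendreTransform_neg heven, abs_neg]) ?_
  rw [← hαs]
  exact hright.congr' (habs.mono fun y hy => by dsimp only; rw [hy])

/-- The Legendre transform of an even approximately `α`-regular function
(`1 < α < ∞`) is approximately `α*`-regular, with `1/α + 1/α* = 1`. -/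
theorem legendre_transform_approx_regular (f : ℝ → ℝ) (α αs : ℝ)
    (hα : 1 < α) (hdual : 1 / α + 1 / αs = 1)
    (heven : ∀ t : ℝ, f (-t) = f t)
    (hC1 : ContDiff ℝ 1 f) (hconv : StrictConvexOn ℝ Set.univ f)
    (hf0 : f 0 = 0) (hf'0 : deriv f 0 = 0)
    (hreg : Tendsto (fun t : ℝ => Real.log (f t) / Real.log |t|)
      (nhdsWithin 0 {(0:ℝ)}ᶜ) (nhds α)) :
    Tendsto (fun y : ℝ =>
        Real.log (sSup (Set.range fun x : ℝ => x * y - f x)) / Real.log |y|)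
      (nhdsWithin 0 {(0:ℝ)}ᶜ) (nhds αs) :=
  legendre_transform_approx_regular_general f α αs hα hdual heven hconv hf0 hreg
end

section
/- Let Ω ⊂ ℝⁿ be a bounded open convex set and F(x,ξ) = (|ξ|/2)(1/|x x⁺| + 1/|x x⁻|) its Finsler metric, where x± are the intersections of the line x + ℝξ with ∂Ω. Then F(x,·) is a norm on ℝⁿ for each x ∈ Ω. -/
/-!
Translate `x` to the origin and let `g` be the gauge (Minkowski functional) of `Ω - x`.
The boundary points on the line `x + ℝξ` are `x + g(ξ)⁻¹ ξ` and `x - g(-ξ)⁻¹ ξ`, so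
`F(x, ξ) = (g(ξ) + g(-ξ)) / 2`. The gauge of a convex neighbourhood of `0` is positively
homogeneous and subadditive, and positive off `0` when the set is bounded; symmetrizing it
therefore gives a norm.
-/

open Set Bornology Topology

section Symmetrize

variable {E : Type*} [AddCommGroup E] [Module ℝ E] {s : Set E}

noncomputable def symmGauge (s : Set E) (ξ : E) : ℝ :=
  (gauge s ξ + gauge s (-ξ)) / 2

theorem symmGauge_smul (s : Set E) (a : ℝ) (ξ : E) :
    symmGauge s (a • ξ) = |a| * symmGauge s ξ := by
  unfold symmGauge
  rcases le_total 0 a with ha | ha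
  · rw [← smul_neg, gauge_smul_of_nonneg ha, gauge_smul_of_nonneg ha, abs_of_nonneg ha,
      smul_eq_mul, smul_eq_mul]
    ring
  · rw [← neg_smul_neg a ξ, ← smul_neg, gauge_smul_of_nonneg (neg_nonneg.2 ha),
      gauge_smul_of_nonneg (neg_nonneg.2 ha), neg_neg, abs_of_nonpos ha, smul_eq_mul,
      smul_eq_mul]
    ring

theorem symmGauge_add_le (hs : Convex ℝ s) (ha : Absorbent ℝ s) (ξ η : E) :
    symmGauge s (ξ + η) ≤ symmGauge s ξ + symmGauge s η := by
  unfold symmGauge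
  rw [neg_add]
  linarith [gauge_add_le hs ha ξ η, gauge_add_le hs ha (-ξ) (-η)]

noncomputable def symmGaugeSeminorm (hs : Convex ℝ s) (ha : Absorbent ℝ s) : Seminorm ℝ E :=
  Seminorm.of (symmGauge s) (symmGauge_add_le hs ha) (symmGauge_smul s)

theorem symmGauge_eq_zero_iff [TopologicalSpace E] [T1Space E] [ContinuousSMul ℝ E]
    (ha : Absorbent ℝ s) (hb : IsVonNBounded ℝ s) {ξ : E} :
    symmGauge s ξ = 0 ↔ ξ = 0 := by
  refine ⟨fun h => ?_, fun h => by simp [symmGauge, h, gauge_zero]⟩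
  by_contra hξ
  have hpos := (gauge_pos ha hb).2 hξ
  have hneg := gauge_nonneg (s := s) (-ξ)
  unfold symmGauge at h
  linarith

end Symmetrize

theorem preimage_add_mem_nhds_zero {G : Type*} [TopologicalSpace G] [AddZeroClass G]
    [ContinuousAdd G] {U : Set G} (hU : IsOpen U) {x : G} (hx : x ∈ U) :
    (x + ·) ⁻¹' U ∈ 𝓝 0 :=
  (hU.preimage (continuous_const_add x)).mem_nhds (by simpa using hx)

section Finsler

variable {E : Type*} [NormedAddCommGroup E] [NormedSpace ℝ E] {Ω : Set E} {x : E}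

theorem add_mem_frontier_iff_gauge_eq_one (hΩ : IsOpen Ω) (hconv : Convex ℝ Ω) (hx : x ∈ Ω)
    (y : E) : x + y ∈ frontier Ω ↔ gauge ((x + ·) ⁻¹' Ω) y = 1 := by
  have hfront : (x + ·) ⁻¹' frontier Ω = frontier ((x + ·) ⁻¹' Ω) :=
    (Homeomorph.addLeft x).preimage_frontier Ω
  rw [gauge_eq_one_iff_mem_frontier (hconv.translate_preimage_right x)
    (preimage_add_mem_nhds_zero hΩ hx), ← hfront, mem_preimage]

theorem isVonNBounded_preimage_add (hbdd : IsBounded Ω) (x : E) :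
    IsVonNBounded ℝ ((x + ·) ⁻¹' Ω) :=
  (NormedSpace.isVonNBounded_iff ℝ).2
    ((isometry_add_left x).antilipschitz.isBounded_preimage hbdd)

theorem one_div_dist_self_add_inv_smul (x ξ : E) (c : ℝ) :
    1 / dist x (x + c⁻¹ • ξ) = |c| / ‖ξ‖ := by
  rw [dist_self_add_right, norm_smul, Real.norm_eq_abs, abs_inv, one_div, mul_inv, inv_inv,
    div_eq_mul_inv]

theorem add_inv_gauge_smul_mem_frontier (hΩ : IsOpen Ω) (hconv : Convex ℝ Ω) (hx : x ∈ Ω)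
    {ξ : E} (hξ : gauge ((x + ·) ⁻¹' Ω) ξ ≠ 0) :
    x + (gauge ((x + ·) ⁻¹' Ω) ξ)⁻¹ • ξ ∈ frontier Ω := by
  rw [add_mem_frontier_iff_gauge_eq_one hΩ hconv hx, gauge_smul_of_nonneg
    (inv_nonneg.2 (gauge_nonneg ξ)), smul_eq_mul, inv_mul_cancel₀ hξ]

theorem eq_symmGauge_of_frontier_formula (hΩ : IsOpen Ω) (hconv : Convex ℝ Ω)
    (hbdd : IsBounded Ω) (hx : x ∈ Ω) {f : E → ℝ} (hf0 : f 0 = 0)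
    (hf : ∀ ξ : E, ξ ≠ 0 → ∀ sp sm : ℝ, 0 < sp → sm < 0 →
      x + sp • ξ ∈ frontier Ω → x + sm • ξ ∈ frontier Ω →
      f ξ = ‖ξ‖ / 2 * (1 / dist x (x + sp • ξ) + 1 / dist x (x + sm • ξ))) :
    f = symmGauge ((x + ·) ⁻¹' Ω) := by
  set s := (x + ·) ⁻¹' Ω
  have hpos : ∀ ξ : E, ξ ≠ 0 → 0 < gauge s ξ := fun ξ =>
    (gauge_pos (absorbent_nhds_zero (preimage_add_mem_nhds_zero hΩ hx))
      (isVonNBounded_preimage_add hbdd x)).2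
  funext ξ
  rcases eq_or_ne ξ 0 with rfl | hξ
  · simp [hf0, symmGauge, gauge_zero]
  have hp := hpos ξ hξ
  have hm := hpos (-ξ) (neg_ne_zero.2 hξ)
  have hfront_m : x + (-gauge s (-ξ))⁻¹ • ξ ∈ frontier Ω := by
    rw [inv_neg, neg_smul, ← smul_neg]
    exact add_inv_gauge_smul_mem_frontier hΩ hconv hx hm.ne'
  rw [hf ξ hξ _ _ (inv_pos.2 hp) (inv_lt_zero.2 (neg_neg_of_pos hm))
    (add_inv_gauge_smul_mem_frontier hΩ hconv hx hp.ne') hfront_m,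
    one_div_dist_self_add_inv_smul, one_div_dist_self_add_inv_smul, abs_of_pos hp, abs_neg,
    abs_of_pos hm, symmGauge]
  field_simp [norm_ne_zero_iff.2 hξ]

end Finsler

/-- The Finsler metric `F(x,ξ) = (‖ξ‖/2)(1/|x x⁺| + 1/|x x⁻|)` of a bounded open convex
set is a norm on `ℝⁿ` at each point `x ∈ Ω`. -/
theorem hilbert_finsler_is_norm (n : ℕ) (Ω : Set (EuclideanSpace ℝ (Fin n)))
    (hΩ : IsOpen Ω) (hconv : Convex ℝ Ω) (hbdd : Bornology.IsBounded Ω)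
    (F : EuclideanSpace ℝ (Fin n) → EuclideanSpace ℝ (Fin n) → ℝ)
    (hF0 : ∀ x, F x 0 = 0)
    (hF : ∀ x ∈ Ω, ∀ ξ : EuclideanSpace ℝ (Fin n), ξ ≠ 0 →
      ∀ sp sm : ℝ, 0 < sp → sm < 0 →
        x + sp • ξ ∈ frontier Ω → x + sm • ξ ∈ frontier Ω →
        F x ξ = ‖ξ‖ / 2 * (1 / dist x (x + sp • ξ) + 1 / dist x (x + sm • ξ)))
    (x : EuclideanSpace ℝ (Fin n)) (hx : x ∈ Ω) :
    (∀ ξ, 0 ≤ F x ξ) ∧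
    (∀ ξ, F x ξ = 0 ↔ ξ = 0) ∧
    (∀ (c : ℝ) (ξ), F x (c • ξ) = |c| * F x ξ) ∧
    (∀ ξ η, F x (ξ + η) ≤ F x ξ + F x η) := by
  have hs_abs : Absorbent ℝ ((x + ·) ⁻¹' Ω) :=
    absorbent_nhds_zero (preimage_add_mem_nhds_zero hΩ hx)
  have hFx : F x = symmGaugeSeminorm (hconv.translate_preimage_right x) hs_abs :=
    eq_symmGauge_of_frontier_formula hΩ hconv hbdd hx (hF0 x) (hF x hx)
  refine ⟨fun ξ => ?_, fun ξ => ?_, fun c ξ => ?_, fun ξ η => ?_⟩ <;> rw [hFx]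
  · exact apply_nonneg _ ξ
  · exact symmGauge_eq_zero_iff hs_abs (isVonNBounded_preimage_add hbdd x)
  · rw [map_smul_eq_mul, Real.norm_eq_abs]
  · exact map_add_le_add _ ξ η
end
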